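/- arXiv:2507.19615 — 3 statements merged into one kernel-verified Lean document; each statement's English description precedes it below -/
import Mathlib

section
/- Let a_1(1), b_1(2) > 0, a_1(2) > 0 and q_{12}, q_{21} > 0. Define γ = 1 + q_{12}/a_1(1) + q_{21}/a_1(2) and, for x > a_1(2)/b_1(2), h_1(x) = C_1 (b_1(2)x - a_1(2))^{q_{21}/a_1(2)} / x^γ and h_2(x) = C_1 a_1(1) (b_1(2)x - a_1(2))^{q_{21}/a_1(2) - 1} / x^γ. Then h_1 and h_2 solve the stationary Fokker–Planck system: 0 = ((a_1(2)x - b_1(2)x^2) h_2(x))' + q_{21} h_2(x) - q_{12} h_1(x) and 0 = (a_1(1) x h_1(x))' + q_{12} h_1(x) - q_{21} h_2(x) on (a_1(2)/b_1(2), ∞). -/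
/-! Both components are of the form `c * (b x - a) ^ p / x ^ γ`, whose logarithmic derivative is
`p b / (b x - a) - γ / x`; moreover `(b₁₂ x - a₁₂) h₂ = a₁₁ h₁`. Differentiating the two fluxes
therefore expresses both sides of each equation as `h₂(x)` times a rational function of `x`, and
the choice of `γ` is exactly what makes these rational functions agree. -/

open Real

lemma hasDerivAt_mul_rpow_sub_div_rpow (c a b p γ : ℝ) {x : ℝ} (hx : 0 < x) (hu : b * x - a ≠ 0) :
    HasDerivAt (fun y => c * (b * y - a) ^ p / y ^ γ)
      (c * (b * x - a) ^ p / x ^ γ * (p * b / (b * x - a) - γ / x)) x := by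
  have hbase : HasDerivAt (fun y => b * y - a) b x := by
    simpa using ((hasDerivAt_id x).const_mul b).sub_const a
  have hnum := (hbase.rpow_const (p := p) (Or.inl hu)).const_mul c
  have hden := hasDerivAt_rpow_const (p := γ) (Or.inl hx.ne')
  refine (hnum.div hden (rpow_pos_of_pos hx γ).ne').congr_deriv ?_
  rw [rpow_sub_one hu, rpow_sub_one hx.ne']
  field_simp

theorem stmt11_general (a11 a12 b12 q12 q21 C1 γ : ℝ)
    (ha11 : 0 < a11) (ha12 : 0 < a12) (hb12 : 0 < b12)
    (hγ : γ = 1 + q12 / a11 + q21 / a12)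
    (h1 h2 : ℝ → ℝ)
    (hh1 : ∀ x, h1 x = C1 * (b12 * x - a12) ^ (q21 / a12) / x ^ γ)
    (hh2 : ∀ x, h2 x = C1 * a11 * (b12 * x - a12) ^ (q21 / a12 - 1) / x ^ γ) :
    ∀ x, a12 / b12 < x →
      HasDerivAt (fun y => (a12 * y - b12 * y ^ 2) * h2 y) (q12 * h1 x - q21 * h2 x) x ∧
      HasDerivAt (fun y => a11 * y * h1 y) (q21 * h2 x - q12 * h1 x) x := by
  intro x hx
  have hx0 : 0 < x := (div_pos ha12 hb12).trans hx
  have hu : 0 < b12 * x - a12 := by linarith [(div_lt_iff₀ hb12).mp hx]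
  have hd1 : HasDerivAt h1 (h1 x * (q21 / a12 * b12 / (b12 * x - a12) - γ / x)) x := by
    simpa only [← hh1] using
      hasDerivAt_mul_rpow_sub_div_rpow C1 a12 b12 (q21 / a12) γ hx0 hu.ne'
  have hd2 : HasDerivAt h2 (h2 x * ((q21 / a12 - 1) * b12 / (b12 * x - a12) - γ / x)) x := by
    simpa only [← hh2] using
      hasDerivAt_mul_rpow_sub_div_rpow (C1 * a11) a12 b12 (q21 / a12 - 1) γ hx0 hu.ne'
  have h1_eq : h1 x = (b12 * x - a12) / a11 * h2 x := by
    rw [hh1, hh2, rpow_sub_one hu.ne']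
    field_simp
  have hflux : HasDerivAt (fun y => a12 * y - b12 * y ^ 2) (a12 - b12 * (2 * x)) x := by
    simpa [Pi.sub_def] using
      ((hasDerivAt_id' x).const_mul a12).sub ((hasDerivAt_pow 2 x).const_mul b12)
  subst hγ
  constructor
  · refine (hflux.mul hd2).congr_deriv ?_
    rw [h1_eq]
    field_simp
    ring
  · refine (((hasDerivAt_id' x).const_mul a11).mul hd1).congr_deriv ?_
    rw [h1_eq]
    field_simp
    ring

theorem stmt11 (a11 a12 b12 q12 q21 C1 γ : ℝ)
    (ha11 : 0 < a11) (ha12 : 0 < a12) (hb12 : 0 < b12)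
    (hq12 : 0 < q12) (hq21 : 0 < q21)
    (hγ : γ = 1 + q12 / a11 + q21 / a12)
    (h1 h2 : ℝ → ℝ)
    (hh1 : ∀ x, h1 x = C1 * (b12 * x - a12) ^ (q21 / a12) / x ^ γ)
    (hh2 : ∀ x, h2 x = C1 * a11 * (b12 * x - a12) ^ (q21 / a12 - 1) / x ^ γ) :
    ∀ x, a12 / b12 < x →
      HasDerivAt (fun y => (a12 * y - b12 * y ^ 2) * h2 y) (q12 * h1 x - q21 * h2 x) x ∧
      HasDerivAt (fun y => a11 * y * h1 y) (q21 * h2 x - q12 * h1 x) x :=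
  stmt11_general a11 a12 b12 q12 q21 C1 γ ha11 ha12 hb12 hγ h1 h2 hh1 hh2
end

section
/- With notation as in the stationary Fokker–Planck system for the 1D growth/logistic PDMP (a_1(1), b_1(2), q_{12}, q_{21} > 0, a_1(2) > 0, γ = 1 + q_{12}/a_1(1) + q_{21}/a_1(2), h_1(x) = C_1 (b_1(2)x - a_1(2))^{q_{21}/a_1(2)} x^{-γ}, h_2(x) = C_1 a_1(1)(b_1(2)x - a_1(2))^{q_{21}/a_1(2)-1} x^{-γ} for x > a_1(2)/b_1(2)): the balance condition ∫_{a_1(2)/b_1(2)}^∞ (q_{12} h_1(x) - q_{21} h_2(x)) dx = 0 holds, equivalently q_{12} ∫_{a_1(2)/b_1(2)}^∞ h_1(x) dx = q_{21} ∫_{a_1(2)/b_1(2)}^∞ h_2(x) dx. -/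
open MeasureTheory Set Filter Topology

theorem stmt12 (a11 a12 b12 q12 q21 C1 γ : ℝ)
    (ha11 : 0 < a11) (ha12 : 0 < a12) (hb12 : 0 < b12)
    (hq12 : 0 < q12) (hq21 : 0 < q21) (hC1 : 0 < C1)
    (hγ : γ = 1 + q12 / a11 + q21 / a12)
    (h1 h2 : ℝ → ℝ)
    (hh1 : ∀ x, h1 x = C1 * (b12 * x - a12) ^ (q21 / a12) / x ^ γ)
    (hh2 : ∀ x, h2 x = C1 * a11 * (b12 * x - a12) ^ (q21 / a12 - 1) / x ^ γ) :
    (∫ x in Set.Ioi (a12 / b12), (q12 * h1 x - q21 * h2 x)) = 0 ∧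
    q12 * ∫ x in Set.Ioi (a12 / b12), h1 x = q21 * ∫ x in Set.Ioi (a12 / b12), h2 x := by
  set p := a12 / b12 with hpdef
  set α := q21 / a12 with hαdef
  have hp : 0 < p := div_pos ha12 hb12
  have hα : 0 < α := div_pos hq21 ha12
  have hαa : α * a12 = q21 := div_mul_cancel₀ _ ha12.ne'
  have hq : 0 < q12 / a11 := div_pos hq12 ha11
  have hbp : b12 * p - a12 = 0 := by
    rw [hpdef, mul_div_assoc', mul_div_cancel_left₀ _ hb12.ne', sub_self]
  have hxpos : ∀ x ∈ Ioi p, 0 < x := fun x hx => hp.trans hx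
  have hApos : ∀ x ∈ Ioi p, 0 < b12 * x - a12 := by
    intro x hx
    have : a12 / b12 < x := hx
    nlinarith [(div_lt_iff₀ hb12).mp this]
  -- limit of ((b12*x - a12)/x)^α at infinity
  have Tbase : Tendsto (fun x : ℝ => (b12 * x - a12) / x) atTop (𝓝 b12) := by
    have h1 : Tendsto (fun x : ℝ => b12 - a12 * x⁻¹) atTop (𝓝 (b12 - a12 * 0)) :=
      tendsto_const_nhds.sub (tendsto_inv_atTop_zero.const_mul a12)
    rw [mul_zero, sub_zero] at h1
    refine h1.congr' ?_
    filter_upwards [eventually_gt_atTop 0] with x hx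
    field_simp
  have Trpow : Tendsto (fun x : ℝ => ((b12 * x - a12) / x) ^ α) atTop (𝓝 (b12 ^ α)) :=
    ((Real.continuousAt_rpow_const b12 α (Or.inl hb12.ne')).tendsto).comp Tbase
  -- generic eventual factorization
  have hfact : ∀ c : ℝ, ∀ᶠ x : ℝ in atTop,
      (b12 * x - a12) ^ α * x ^ c = ((b12 * x - a12) / x) ^ α * x ^ (α + c) := by
    intro c
    filter_upwards [eventually_gt_atTop p] with x hx
    have hx0 : 0 < x := hxpos x hx
    have hA : 0 < b12 * x - a12 := hApos x hx
    rw [Real.div_rpow hA.le hx0.le, Real.rpow_add hx0]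
    field_simp
  have T1 : Tendsto (fun x : ℝ => (b12 * x - a12) ^ α * x ^ (-α)) atTop (𝓝 (b12 ^ α)) := by
    have := (Trpow.mul (tendsto_const_nhds : Tendsto (fun _ : ℝ => (1:ℝ)) atTop (𝓝 1)))
    rw [mul_one] at this
    refine Tendsto.congr' ?_ this
    filter_upwards [hfact (-α)] with x hx
    rw [hx, add_neg_cancel, Real.rpow_zero]
  have T2 : Tendsto (fun x : ℝ => (b12 * x - a12) ^ α * x ^ (1 - γ)) atTop (𝓝 0) := by
    have hneg : 0 < -(α + (1 - γ)) := by rw [hγ]; linarith [hq]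
    have h2' : Tendsto (fun x : ℝ => x ^ (α + (1 - γ))) atTop (𝓝 0) := by
      have := tendsto_rpow_neg_atTop hneg
      simpa using this
    have := Trpow.mul h2'
    rw [mul_zero] at this
    exact Tendsto.congr' (by filter_upwards [hfact (1-γ)] with x hx; rw [hx]) this
  -- generic derivative
  have hD : ∀ s : ℝ, ∀ x ∈ Ioi p, HasDerivAt (fun y : ℝ => (b12 * y - a12) ^ α * y ^ s)
      ((b12 * (α * (b12 * x - a12) ^ (α - 1))) * x ^ s
        + (b12 * x - a12) ^ α * (s * x ^ (s - 1))) x := by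
    intro s x hx
    have hx0 : x ≠ 0 := (hxpos x hx).ne'
    have hA : (b12 * x - a12) ≠ 0 := (hApos x hx).ne'
    have d0 : HasDerivAt (fun y : ℝ => b12 * y - a12) b12 x := by
      simpa using ((hasDerivAt_id x).const_mul b12).sub_const a12
    have d1 : HasDerivAt (fun y : ℝ => (b12 * y - a12) ^ α)
        (b12 * (α * (b12 * x - a12) ^ (α - 1))) x := by
      have := d0.rpow_const (p := α) (Or.inl hA)
      simpa [mul_assoc] using this
    have d2 : HasDerivAt (fun y : ℝ => y ^ s) (s * x ^ (s - 1)) x :=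
      Real.hasDerivAt_rpow_const (Or.inl hx0)
    exact d1.mul d2
  -- rpow split identities on Ioi p
  have hsplitA : ∀ x ∈ Ioi p, (b12 * x - a12) ^ α = (b12 * x - a12) ^ (α - 1) * (b12 * x - a12) := by
    intro x hx
    have hA := hApos x hx
    rw [← Real.rpow_add_one hA.ne' (α - 1), sub_add_cancel]
  have hsplitX : ∀ (s : ℝ), ∀ x ∈ Ioi p, (x : ℝ) ^ s = x ^ (s - 1) * x := by
    intro s x hx
    rw [← Real.rpow_add_one (hxpos x hx).ne' (s - 1), sub_add_cancel]
  -- integrability of the weight function w = (b12 x - a12)^(α-1) * x^(-α-1)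
  have hwmeas : IntegrableOn
      (fun x : ℝ => b12 * (α * (b12 * x - a12) ^ (α - 1)) * x ^ (-α)
        + (b12 * x - a12) ^ α * (-α * x ^ (-α - 1))) (Ioi p) := by
    refine integrableOn_Ioi_deriv_of_nonneg ?_ (hD (-α)) ?_ T1
    · have c1 : ContinuousAt (fun y : ℝ => (b12 * y - a12) ^ α) p := by
        have hcont : ContinuousAt (fun y : ℝ => b12 * y - a12) p := by fun_prop
        exact hcont.rpow_const (Or.inr hα.le)
      have c2 : ContinuousAt (fun y : ℝ => y ^ (-α)) p :=
        Real.continuousAt_rpow_const _ _ (Or.inl hp.ne')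
      exact (c1.mul c2).continuousWithinAt
    · intro x hx
      have hx0 := hxpos x hx
      have hA := hApos x hx
      rw [hsplitA x hx, hsplitX (-α) x hx]
      have e1 : (0:ℝ) < (b12 * x - a12) ^ (α - 1) := Real.rpow_pos_of_pos hA _
      have e2 : (0:ℝ) < x ^ (-α - 1) := Real.rpow_pos_of_pos hx0 _
      have : b12 * (α * (b12 * x - a12) ^ (α - 1)) * (x ^ (-α - 1) * x)
          + (b12 * x - a12) ^ (α - 1) * (b12 * x - a12) * (-α * x ^ (-α - 1))
          = α * a12 * ((b12 * x - a12) ^ (α - 1) * x ^ (-α - 1)) := by ring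
      rw [this]
      positivity
  have hw : IntegrableOn
      (fun x : ℝ => (b12 * x - a12) ^ (α - 1) * x ^ (-α - 1)) (Ioi p) := by
    have hInt := hwmeas.const_mul (α * a12)⁻¹
    refine hInt.congr ?_
    refine (ae_restrict_iff' measurableSet_Ioi).mpr (Eventually.of_forall fun x hx => ?_)
    have hx0 := hxpos x hx
    have hA := hApos x hx
    dsimp only
    rw [hsplitA x hx, hsplitX (-α) x hx]
    have hne : α * a12 ≠ 0 := by positivity
    field_simp
    ring
  -- integrability of h2
  have Ih2 : IntegrableOn h2 (Ioi p) := by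
    have hmeas : AEStronglyMeasurable h2 (volume.restrict (Ioi p)) := by
      have : ContinuousOn h2 (Ioi p) := by
        have : ContinuousOn (fun x : ℝ =>
            C1 * a11 * (b12 * x - a12) ^ (α - 1) / x ^ γ) (Ioi p) := by
          apply ContinuousOn.div
          · exact (continuousOn_const.mul
              (((continuous_const.mul continuous_id).sub continuous_const).continuousOn.rpow_const
                (fun x hx => Or.inl (hApos x hx).ne')))
          · exact (continuousOn_id.rpow_const (fun x hx => Or.inl (hxpos x hx).ne'))
          · exact fun x hx => (Real.rpow_pos_of_pos (hxpos x hx) γ).ne'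
        exact this.congr (fun x _ => hh2 x)
      exact this.aestronglyMeasurable measurableSet_Ioi
    set K : ℝ := C1 * a11 * p ^ (α + 1 - γ) with hK
    refine Integrable.mono' (hw.const_mul K) hmeas ?_
    refine (ae_restrict_iff' measurableSet_Ioi).mpr (Eventually.of_forall ?_)
    intro x hx
    have hx0 := hxpos x hx
    have hA := hApos x hx
    have h2pos : 0 < h2 x := by
      rw [hh2]
      positivity
    rw [Real.norm_of_nonneg h2pos.le, hh2]
    have hxg : x ^ γ ≠ 0 := (Real.rpow_pos_of_pos hx0 γ).ne'
    rw [div_eq_mul_inv, ← Real.rpow_neg hx0.le]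
    have hsplit : x ^ (-γ) = x ^ (α + 1 - γ) * x ^ (-α - 1) := by
      rw [← Real.rpow_add hx0]; ring_nf
    have hle : x ^ (α + 1 - γ) ≤ p ^ (α + 1 - γ) := by
      refine Real.rpow_le_rpow_of_nonpos hp (le_of_lt hx) ?_
      rw [hγ]; linarith [hq]
    rw [hsplit, hK]
    have e1 : (0:ℝ) < (b12 * x - a12) ^ (α - 1) := Real.rpow_pos_of_pos hA _
    have e2 : (0:ℝ) < x ^ (-α - 1) := Real.rpow_pos_of_pos hx0 _
    calc C1 * a11 * (b12 * x - a12) ^ (α - 1) * (x ^ (α + 1 - γ) * x ^ (-α - 1))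
        ≤ C1 * a11 * (b12 * x - a12) ^ (α - 1) * (p ^ (α + 1 - γ) * x ^ (-α - 1)) := by
          have : (0:ℝ) ≤ C1 * a11 * (b12 * x - a12) ^ (α - 1) := by positivity
          nlinarith [mul_le_mul_of_nonneg_right hle e2.le]
      _ = C1 * a11 * p ^ (α + 1 - γ) * ((b12 * x - a12) ^ (α - 1) * x ^ (-α - 1)) := by ring
  -- integrability of h1
  have Ih1 : IntegrableOn h1 (Ioi p) := by
    have hmeas : AEStronglyMeasurable h1 (volume.restrict (Ioi p)) := by
      have : ContinuousOn h1 (Ioi p) := by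
        have : ContinuousOn (fun x : ℝ =>
            C1 * (b12 * x - a12) ^ α / x ^ γ) (Ioi p) := by
          apply ContinuousOn.div
          · exact (continuousOn_const.mul
              (((continuous_const.mul continuous_id).sub continuous_const).continuousOn.rpow_const
                (fun x hx => Or.inl (hApos x hx).ne')))
          · exact (continuousOn_id.rpow_const (fun x hx => Or.inl (hxpos x hx).ne'))
          · exact fun x hx => (Real.rpow_pos_of_pos (hxpos x hx) γ).ne'
        exact this.congr (fun x _ => hh1 x)
      exact this.aestronglyMeasurable measurableSet_Ioi
    have hαγ : α - γ < -1 := by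
      rw [hγ]; linarith [hq]
    have hbase : IntegrableOn (fun x : ℝ => x ^ (α - γ)) (Ioi p) :=
      integrableOn_Ioi_rpow_of_lt hαγ hp
    refine Integrable.mono' (hbase.const_mul (C1 * b12 ^ α)) hmeas ?_
    refine (ae_restrict_iff' measurableSet_Ioi).mpr (Eventually.of_forall ?_)
    intro x hx
    have hx0 := hxpos x hx
    have hA := hApos x hx
    have h1pos : 0 < h1 x := by rw [hh1]; positivity
    rw [Real.norm_of_nonneg h1pos.le, hh1]
    rw [div_eq_mul_inv, ← Real.rpow_neg hx0.le]
    have hle : (b12 * x - a12) ^ α ≤ (b12 * x) ^ α := by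
      refine Real.rpow_le_rpow hA.le (by linarith) hα.le
    calc C1 * (b12 * x - a12) ^ α * x ^ (-γ)
        ≤ C1 * (b12 * x) ^ α * x ^ (-γ) := by
          have e2 : (0:ℝ) < x ^ (-γ) := Real.rpow_pos_of_pos hx0 _
          nlinarith [mul_le_mul_of_nonneg_right hle e2.le]
      _ = C1 * b12 ^ α * x ^ (α - γ) := by
          rw [Real.mul_rpow hb12.le hx0.le,
            show α - γ = α + (-γ) by ring, Real.rpow_add hx0]
          ring
  -- the antiderivative F
  set F : ℝ → ℝ := fun x => -(a11 * C1) * ((b12 * x - a12) ^ α * x ^ (1 - γ)) with hF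
  have hFd : ∀ x ∈ Ioi p, HasDerivAt F (q12 * h1 x - q21 * h2 x) x := by
    intro x hx
    have hx0 := hxpos x hx
    have hA := hApos x hx
    have := (hD (1 - γ) x hx).const_mul (-(a11 * C1))
    refine HasDerivAt.congr_deriv this ?_
    symm
    rw [hh1, hh2, hsplitA x hx, hsplitX (1 - γ) x hx]
    have hg1 : (1 - γ) - 1 = -γ := by ring
    rw [hg1]
    rw [div_eq_mul_inv, div_eq_mul_inv, ← Real.rpow_neg hx0.le]
    have hrel : a11 * (γ - 1) = q12 + a11 * α := by
      rw [hγ]; field_simp; ring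
    have hq21' : q21 = α * a12 := hαa.symm
    rw [hq21']
    linear_combination
      (-(C1 * (b12 * x - a12) ^ (α - 1) * x ^ (-γ) * (b12 * x - a12))) * hrel
  have hFc : ContinuousWithinAt F (Ici p) p := by
    have c1 : ContinuousAt (fun y : ℝ => (b12 * y - a12) ^ α) p := by
      have hcont : ContinuousAt (fun y : ℝ => b12 * y - a12) p := by fun_prop
      exact hcont.rpow_const (Or.inr hα.le)
    have c2 : ContinuousAt (fun y : ℝ => y ^ (1 - γ)) p :=
      Real.continuousAt_rpow_const _ _ (Or.inl hp.ne')
    exact (continuousAt_const.mul (c1.mul c2)).continuousWithinAt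
  have hFt : Tendsto F atTop (𝓝 0) := by
    have h := T2.const_mul (-(a11 * C1))
    rw [mul_zero] at h
    exact h
  have hF0 : F p = 0 := by
    simp [hF, hbp, Real.zero_rpow hα.ne']
  have hint : IntegrableOn (fun x => q12 * h1 x - q21 * h2 x) (Ioi p) :=
    (Ih1.const_mul q12).sub (Ih2.const_mul q21)
  have key : (∫ x in Ioi p, (q12 * h1 x - q21 * h2 x)) = 0 - F p :=
    integral_Ioi_of_hasDerivAt_of_tendsto hFc hFd hint hFt
  rw [hF0, sub_zero] at key
  refine ⟨key, ?_⟩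
  have key2 := key
  rw [integral_sub (Ih1.const_mul q12) (Ih2.const_mul q21),
    integral_const_mul, integral_const_mul] at key2
  linarith
end

section
/- For the switched two-dimensional competitive Lotka–Volterra system with vector fields V(1)(x) = (a_1(1)x_1, a_2(1)x_2) (linear) and V(2)(x) = (x_1(a_1(2)-b_1(2)x_1-c_1(2)x_2), x_2(a_2(2)-b_2(2)x_2-c_2(2)x_1)), the determinant of the 2×2 matrix whose columns are V(1)-V(2) and the Lie bracket [V(1), V(1)-V(2)] equals B x_1^2 x_2^2 + A_1 x_1 x_2^2 + A_2 x_1^2 x_2, where A_1 = (a_1(1)-a_1(2)) a_2(1) b_2(2) - a_2(1) c_1(2)(a_2(1)-a_2(2)), A_2 = (a_1(1)-a_1(2)) a_1(1) c_2(2) - a_1(1) b_1(2)(a_2(1)-a_2(2)), and B = (a_2(1)-a_1(1)) b_1(2) b_2(2) + (a_1(1)-a_2(1)) c_1(2) c_2(2). -/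
noncomputable def lieBracket (V W : (Fin 2 → ℝ) → (Fin 2 → ℝ)) (x : Fin 2 → ℝ) :
    Fin 2 → ℝ :=
  fderiv ℝ W x (V x) - fderiv ℝ V x (W x)

/-! Both fields are polynomial, so their Jacobians are explicit, and the linear field is its own
Jacobian. Substituting them into `[V, W](x) = DW(x) V(x) - DV(x) W(x)` turns the determinant into
a polynomial identity in `x`. -/

open ContinuousLinearMap

theorem hasFDerivAt_vecCons₂ {𝕜 E F : Type*} [NontriviallyNormedField 𝕜]
    [NormedAddCommGroup E] [NormedSpace 𝕜 E] [NormedAddCommGroup F] [NormedSpace 𝕜 F]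
    {f g : E → F} {f' g' : E →L[𝕜] F} {x : E}
    (hf : HasFDerivAt f f' x) (hg : HasFDerivAt g g' x) :
    HasFDerivAt (fun y => ![f y, g y]) (pi ![f', g']) x :=
  hasFDerivAt_pi'' <| Fin.forall_fin_two.2 ⟨hf, hg⟩

theorem lieBracket_eq_of_hasFDerivAt {V W : (Fin 2 → ℝ) → (Fin 2 → ℝ)}
    {V' W' : (Fin 2 → ℝ) →L[ℝ] (Fin 2 → ℝ)} {x : Fin 2 → ℝ}
    (hV : HasFDerivAt V V' x) (hW : HasFDerivAt W W' x) :
    lieBracket V W x = W' (V x) - V' (W x) := by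
  rw [lieBracket, hV.fderiv, hW.fderiv]

def diagonalField (α β : ℝ) (y : Fin 2 → ℝ) : Fin 2 → ℝ := ![α * y 0, β * y 1]

def lotkaVolterraField (a₁ a₂ b₁ b₂ c₁ c₂ : ℝ) (y : Fin 2 → ℝ) : Fin 2 → ℝ :=
  ![y 0 * (a₁ - b₁ * y 0 - c₁ * y 1), y 1 * (a₂ - b₂ * y 1 - c₂ * y 0)]

theorem hasFDerivAt_diagonalField (α β : ℝ) (x : Fin 2 → ℝ) :
    HasFDerivAt (diagonalField α β) (pi ![α • (proj 0 : (Fin 2 → ℝ) →L[ℝ] ℝ), β • proj 1]) x :=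
  hasFDerivAt_vecCons₂ ((hasFDerivAt_apply 0 x).const_smul α)
    ((hasFDerivAt_apply 1 x).const_smul β)

theorem hasFDerivAt_lotkaVolterraField (a₁ a₂ b₁ b₂ c₁ c₂ : ℝ) (x : Fin 2 → ℝ) :
    HasFDerivAt (lotkaVolterraField a₁ a₂ b₁ b₂ c₁ c₂)
      (pi ![(a₁ - 2 * b₁ * x 0 - c₁ * x 1) • (proj 0 : (Fin 2 → ℝ) →L[ℝ] ℝ) - (c₁ * x 0) • proj 1,
        (a₂ - 2 * b₂ * x 1 - c₂ * x 0) • proj 1 - (c₂ * x 1) • proj 0]) x := by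
  have h₀ := hasFDerivAt_apply (𝕜 := ℝ) 0 x
  have h₁ := hasFDerivAt_apply (𝕜 := ℝ) 1 x
  refine hasFDerivAt_vecCons₂ ?_ ?_
  · refine (h₀.mul ((h₀.const_mul b₁).const_sub a₁ |>.sub (h₁.const_mul c₁))).congr_fderiv ?_
    ext v
    simp only [Pi.sub_apply, add_apply, smul_apply, sub_apply, neg_apply, proj_apply, smul_eq_mul]
    ring
  · refine (h₁.mul ((h₁.const_mul b₂).const_sub a₂ |>.sub (h₀.const_mul c₂))).congr_fderiv ?_
    ext v
    simp only [Pi.sub_apply, add_apply, smul_apply, sub_apply, neg_apply, proj_apply, smul_eq_mul]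
    ring

theorem stmt15 (a11 a21 a12 a22 b12 b22 c12 c22 : ℝ) :
    ∀ x : Fin 2 → ℝ,
      (let V1 : (Fin 2 → ℝ) → (Fin 2 → ℝ) := fun y => ![a11 * y 0, a21 * y 1]
       let V2 : (Fin 2 → ℝ) → (Fin 2 → ℝ) := fun y =>
        ![y 0 * (a12 - b12 * y 0 - c12 * y 1), y 1 * (a22 - b22 * y 1 - c22 * y 0)]
       let A1 : ℝ := (a11 - a12) * a21 * b22 - a21 * c12 * (a21 - a22)
       let A2 : ℝ := (a11 - a12) * a11 * c22 - a11 * b12 * (a21 - a22)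
       let B : ℝ := (a21 - a11) * b12 * b22 + (a11 - a21) * c12 * c22
       (V1 x - V2 x) 0 * (lieBracket V1 (fun y => V1 y - V2 y) x) 1 -
         (lieBracket V1 (fun y => V1 y - V2 y) x) 0 * (V1 x - V2 x) 1
        = B * (x 0) ^ 2 * (x 1) ^ 2 + A1 * (x 0) * (x 1) ^ 2 + A2 * (x 0) ^ 2 * (x 1)) := by
  intro x
  set V₁ := diagonalField a11 a21
  set V₂ := lotkaVolterraField a12 a22 b12 b22 c12 c22
  have hV₁ := hasFDerivAt_diagonalField a11 a21 x
  have hV₂ := hasFDerivAt_lotkaVolterraField a12 a22 b12 b22 c12 c22 x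
  show (V₁ x - V₂ x) 0 * lieBracket V₁ (fun y => V₁ y - V₂ y) x 1 -
      lieBracket V₁ (fun y => V₁ y - V₂ y) x 0 * (V₁ x - V₂ x) 1 = _
  have hW : HasFDerivAt (fun y => V₁ y - V₂ y) _ x := hV₁.sub hV₂
  rw [lieBracket_eq_of_hasFDerivAt hV₁ hW]
  simp only [V₁, V₂, diagonalField, lotkaVolterraField, Pi.sub_apply, sub_apply, coe_pi',
    Matrix.sub_cons, Matrix.cons_val_zero, Matrix.cons_val_one, Matrix.head_cons,
    Matrix.tail_cons, Matrix.cons_val_fin_one, smul_apply, proj_apply, smul_eq_mul]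
  ring
end
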